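/- Let a = 0 and b ≠ 0, and let Λ = b(x1²+x2²)∂1∧∂2 + 2b x1 x3 ∂2∧∂3 + 2b x2 x3 ∂3∧∂1 be the corresponding quadratic Poisson bracket on polynomials, {f,g} defined by contraction with Λ. Then D = (x1²+x2²)x3 is a Casimir function: {D, g} = 0 for every polynomial g; consequently every power D^m is a Casimir. -/
import Mathlib


open MvPolynomial

noncomputable section

abbrev R3 := MvPolynomial (Fin 3) ℝ

/-- The Poisson bracket on polynomials associated to the bivector
`Λ = b(x1²+x2²)∂1∧∂2 + 2b·x1x3·∂2∧∂3 + 2b·x2x3·∂3∧∂1` (the case `a = 0`):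
`{f,g} = Λ¹²(∂1f∂2g − ∂2f∂1g) + Λ²³(∂2f∂3g − ∂3f∂2g) + Λ³¹(∂3f∂1g − ∂1f∂3g)`. -/
def br (b : ℝ) (f g : R3) : R3 :=
  C b * (X 0 ^ 2 + X 1 ^ 2) * (pderiv 0 f * pderiv 1 g - pderiv 1 f * pderiv 0 g)
  + C (2*b) * X 0 * X 2 * (pderiv 1 f * pderiv 2 g - pderiv 2 f * pderiv 1 g)
  + C (2*b) * X 1 * X 2 * (pderiv 2 f * pderiv 0 g - pderiv 0 f * pderiv 2 g)

def D : R3 := (X 0 ^ 2 + X 1 ^ 2) * X 2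

lemma d0 : pderiv 0 D = 2 * X 0 * X 2 := by simp [D, pderiv_X]; ring
lemma d1 : pderiv 1 D = 2 * X 1 * X 2 := by simp [D, pderiv_X]; ring
lemma d2 : pderiv 2 D = X 0 ^ 2 + X 1 ^ 2 := by simp [D, pderiv_X]

/-- For `a = 0`, `b ≠ 0`, the function `D = (x1²+x2²)x3` is a Casimir of the quadratic
Poisson structure `Λ = b(x1²+x2²)∂1∧∂2 + 2b·x1x3·∂2∧∂3 + 2b·x2x3·∂3∧∂1`, and
consequently so is every power `D^m`. -/
theorem D_is_Casimir (b : ℝ) (hb : b ≠ 0) :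
    (∀ g : R3, br b D g = 0) ∧ (∀ m : ℕ, ∀ g : R3, br b (D ^ m) g = 0) := by
  have h1 : ∀ g : R3, br b D g = 0 := by
    intro g
    simp only [br, d0, d1, d2, C_mul, map_ofNat]
    ring
  refine ⟨h1, fun m g => ?_⟩
  have hp : ∀ i : Fin 3, pderiv i (D ^ m) = (m : R3) * D ^ (m - 1) * pderiv i D := by
    intro i
    rw [(pderiv i).leibniz_pow]
    simp [smul_eq_mul]
    ring
  have key : br b (D ^ m) g = (m : R3) * D ^ (m - 1) * br b D g := by
    simp only [br, hp]
    ring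
  rw [key, h1 g, mul_zero]

end
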